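/- arXiv:2510.13061 — 3 statements merged into one kernel-verified Lean document; each statement's English description precedes it below -/
import Mathlib

section
/- Let γ ∈ (0,1] and let α₁, α₂, …, α_d be distinct numbers in the interval (1/(1+γ), 1). For each j ∈ {1,…,d} let f_j : ℝ → ℝ be continuous and strictly C^{0,α_j} at every point of ℝ, and define f : ℝ^d → ℝ by f(x₁, …, x_d) = Σ_{j=1}^d f_j(x_j). Then for every C¹ curve c : [a,b] → ℝ^d of unit speed (‖c′(s)‖ = 1 for all s) satisfying ‖c′(s₂) − c′(s₁)‖ ≤ ρ|s₂ − s₁|^γ for all s₁, s₂ ∈ [a,b] (for some ρ ≥ 0), and for every s₀ ∈ (a,b), there exists α ∈ {α₁, α₂, …, α_d} such that f∘c is strictly C^{0,α} at s₀. -/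
open Set Filter Topology Asymptotics

/-!
Let `v = c'(s₀)`. A coordinate with `v i ≠ 0` moves linearly, `c s i - c s₀ i = O(|s - s₀|)`,
while by the `C^{1,γ}` Taylor estimate one with `v i = 0` moves only by `O(|s - s₀|^(1+γ))`; so the
increment of `f i ∘ c_i` is `O(|s - s₀|^(α i))`, resp. `O(|s - s₀|^((1+γ) α i))` with
`(1+γ) α i > 1`. Let `j` minimise `α` among the moving coordinates. Every other term is then
`O(|s - s₀|^b)` for some `b > α j`, while `c_j` is a local diffeomorphism at `s₀`, so `f j ∘ c_j`
inherits from `f j` the failure of every Hölder bound of exponent `β > α j`. Hence the sum is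
strictly `C^{0,α j}` at `s₀`.
-/

def StrictHolderAt (f : ℝ → ℝ) (I : Set ℝ) (α x₀ : ℝ) : Prop :=
  (∃ M : ℝ, ∀ᶠ x in 𝓝[I \ {x₀}] x₀, |f x - f x₀| / |x - x₀| ^ α ≤ M) ∧
  ∀ β : ℝ, α < β → ∀ M : ℝ, ∃ᶠ x in 𝓝[I \ {x₀}] x₀, M < |f x - f x₀| / |x - x₀| ^ β

section HolderIncrements

variable {f : ℝ → ℝ} {I : Set ℝ} {x₀ α β : ℝ}

theorem isBigO_abs_sub_rpow_of_le {b e : ℝ} (hb : 0 < b) (hbe : b ≤ e) :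
    (fun x => |x - x₀| ^ e) =O[𝓝 x₀] (fun x => |x - x₀| ^ b) := by
  refine IsBigO.of_bound 1 ?_
  filter_upwards [Metric.ball_mem_nhds x₀ one_pos] with x hx
  rw [Metric.mem_ball, Real.dist_eq] at hx
  simp only [Real.norm_eq_abs, one_mul, abs_of_nonneg (Real.rpow_nonneg (abs_nonneg _) _)]
  exact Real.rpow_le_rpow_of_exponent_ge' (abs_nonneg _) hx.le hb.le hbe

theorem exists_bound_div_rpow_iff_isBigO :
    (∃ M : ℝ, ∀ᶠ x in 𝓝[≠] x₀, |f x - f x₀| / |x - x₀| ^ α ≤ M) ↔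
      (fun x => f x - f x₀) =O[𝓝[≠] x₀] (fun x => |x - x₀| ^ α) := by
  rw [isBigO_iff]
  refine exists_congr fun M => eventually_congr ?_
  filter_upwards [self_mem_nhdsWithin] with x hx
  have hpos : 0 < |x - x₀| ^ α := Real.rpow_pos_of_pos (abs_pos.2 (sub_ne_zero.2 hx)) _
  rw [div_le_iff₀ hpos, Real.norm_eq_abs, Real.norm_eq_abs, abs_of_pos hpos]

theorem strictHolderAt_iff_of_mem_nhds (hI : I ∈ 𝓝 x₀) :
    StrictHolderAt f I α x₀ ↔
      (fun x => f x - f x₀) =O[𝓝[≠] x₀] (fun x => |x - x₀| ^ α) ∧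
      ∀ β, α < β → ¬ (fun x => f x - f x₀) =O[𝓝[≠] x₀] (fun x => |x - x₀| ^ β) := by
  have hl : 𝓝[I \ {x₀}] x₀ = 𝓝[≠] x₀ := by
    rw [sdiff_eq_compl_inter, nhdsWithin_inter_of_mem' (mem_nhdsWithin_of_mem_nhds hI)]
  simp only [StrictHolderAt, hl, ← exists_bound_div_rpow_iff_isBigO, Filter.Frequently, not_lt,
    not_exists]

theorem StrictHolderAt.isBigO (hf : StrictHolderAt f I α x₀) (hI : I ∈ 𝓝 x₀) :
    (fun x => f x - f x₀) =O[𝓝 x₀] (fun x => |x - x₀| ^ α) := by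
  rw [← nhdsNE_sup_pure, isBigO_sup]
  exact ⟨((strictHolderAt_iff_of_mem_nhds hI).1 hf).1, isBigO_pure.2 fun _ => sub_self _⟩

theorem StrictHolderAt.not_isBigO (hf : StrictHolderAt f I α x₀) (hI : I ∈ 𝓝 x₀) (hβ : α < β) :
    ¬ (fun x => f x - f x₀) =O[𝓝[≠] x₀] (fun x => |x - x₀| ^ β) :=
  ((strictHolderAt_iff_of_mem_nhds hI).1 hf).2 β hβ

end HolderIncrements

theorem Asymptotics.IsBigO.comp_sub_rpow {f φ : ℝ → ℝ} {x₀ α e : ℝ} (hα : 0 ≤ α)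
    (hf : (fun y => f y - f (φ x₀)) =O[𝓝 (φ x₀)] (fun y => |y - φ x₀| ^ α))
    (hφ : (fun x => φ x - φ x₀) =O[𝓝 x₀] (fun x => |x - x₀| ^ e)) (hφc : ContinuousAt φ x₀) :
    (fun x => f (φ x) - f (φ x₀)) =O[𝓝 x₀] (fun x => |x - x₀| ^ (e * α)) := by
  have hpow : (fun x => |φ x - φ x₀| ^ α) =O[𝓝 x₀] (fun x => (|x - x₀| ^ e) ^ α) :=
    (isBigO_abs_left.2 hφ).rpow hα (Eventually.of_forall fun _ => Real.rpow_nonneg (abs_nonneg _) _)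
  simp only [← Real.rpow_mul (abs_nonneg _)] at hpow
  exact (hf.comp_tendsto hφc.tendsto).trans hpow

theorem not_isBigO_comp_of_hasStrictDerivAt {f φ : ℝ → ℝ} {φ' x₀ β : ℝ}
    (hφ : HasStrictDerivAt φ φ' x₀) (hφ' : φ' ≠ 0) (hβ : 0 ≤ β)
    (hf : ¬ (fun y => f y - f (φ x₀)) =O[𝓝[≠] (φ x₀)] (fun y => |y - φ x₀| ^ β)) :
    ¬ (fun x => f (φ x) - f (φ x₀)) =O[𝓝[≠] x₀] (fun x => |x - x₀| ^ β) := by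
  intro h
  apply hf
  set ψ := hφ.localInverse φ φ' x₀ hφ'
  have hψ : HasStrictDerivAt ψ φ'⁻¹ (φ x₀) := hφ.to_localInverse hφ'
  have hψx₀ : ψ (φ x₀) = x₀ := (hφ.eventually_left_inverse hφ').self_of_nhds
  have hright : ∀ᶠ y in 𝓝[≠] (φ x₀), φ (ψ y) = y :=
    nhdsWithin_le_nhds (hφ.eventually_right_inverse hφ')
  have hψlim : Tendsto ψ (𝓝[≠] (φ x₀)) (𝓝[≠] x₀) := by
    refine tendsto_nhdsWithin_of_tendsto_nhds_of_eventually_within _ ?_ ?_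
    · simpa only [hψx₀] using hψ.hasDerivAt.continuousAt.tendsto.mono_left nhdsWithin_le_nhds
    · filter_upwards [hright, self_mem_nhdsWithin] with y hy hne hψy
      exact hne (hψy ▸ hy).symm
  have hψO : (fun y => |ψ y - x₀| ^ β) =O[𝓝[≠] (φ x₀)] (fun y => |y - φ x₀| ^ β) := by
    have hlin := hψ.hasDerivAt.isBigO_sub
    rw [hψx₀] at hlin
    exact ((isBigO_abs_left.2 (isBigO_abs_right.2 hlin)).rpow hβ
      (Eventually.of_forall fun _ => abs_nonneg _)).mono nhdsWithin_le_nhds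
  refine EventuallyEq.trans_isBigO ?_ ((h.comp_tendsto hψlim).trans hψO)
  filter_upwards [hright] with y hy
  simp only [Function.comp_apply, hy]

theorem norm_sub_sub_smul_derivWithin_le {E : Type*} [NormedAddCommGroup E] [NormedSpace ℝ E]
    {c : ℝ → E} {I : Set ℝ} (hI : Convex ℝ I) (hc : DifferentiableOn ℝ c I) {ρ γ : ℝ}
    (hρ : 0 ≤ ρ) (hγ : 0 ≤ γ)
    (hH : ∀ s₁ ∈ I, ∀ s₂ ∈ I, ‖derivWithin c I s₂ - derivWithin c I s₁‖ ≤ ρ * |s₂ - s₁| ^ γ)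
    {s₀ s : ℝ} (hs₀ : s₀ ∈ I) (hs : s ∈ I) :
    ‖c s - c s₀ - (s - s₀) • derivWithin c I s₀‖ ≤ ρ * |s - s₀| ^ (1 + γ) := by
  set v := derivWithin c I s₀
  have hJ : uIcc s₀ s ⊆ I := segment_eq_uIcc s₀ s ▸ hI.segment_subset hs₀ hs
  have hderiv : ∀ t ∈ uIcc s₀ s,
      HasDerivWithinAt (fun t => c t - t • v) (derivWithin c I t - v) (uIcc s₀ s) t := fun t ht =>
    ((hc t (hJ ht)).hasDerivWithinAt.mono hJ).sub
      ((hasDerivWithinAt_id t _).smul_const v |>.congr_deriv (one_smul ℝ v))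
  have hbound : ∀ t ∈ uIcc s₀ s, ‖derivWithin c I t - v‖ ≤ ρ * |s - s₀| ^ γ := fun t ht =>
    (hH s₀ hs₀ t (hJ ht)).trans <| mul_le_mul_of_nonneg_left
      (Real.rpow_le_rpow (abs_nonneg _) (abs_sub_left_of_mem_uIcc ht) hγ) hρ
  have := Convex.norm_image_sub_le_of_norm_hasDerivWithin_le hderiv hbound (convex_uIcc s₀ s)
    left_mem_uIcc right_mem_uIcc
  rw [Real.rpow_add' (abs_nonneg _) (by linarith), Real.rpow_one]
  calc ‖c s - c s₀ - (s - s₀) • v‖ = ‖(c s - s • v) - (c s₀ - s₀ • v)‖ := by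
        rw [sub_smul]; congr 1; abel
    _ ≤ ρ * |s - s₀| ^ γ * ‖s - s₀‖ := this
    _ = ρ * (|s - s₀| * |s - s₀| ^ γ) := by rw [Real.norm_eq_abs]; ring

theorem isBigO_sub_sub_smul_derivWithin {E : Type*} [NormedAddCommGroup E] [NormedSpace ℝ E]
    {c : ℝ → E} {I : Set ℝ} {s₀ : ℝ} (hI : I ∈ 𝓝 s₀) (hIc : Convex ℝ I)
    (hc : DifferentiableOn ℝ c I) {ρ γ : ℝ} (hρ : 0 ≤ ρ) (hγ : 0 ≤ γ)
    (hH : ∀ s₁ ∈ I, ∀ s₂ ∈ I, ‖derivWithin c I s₂ - derivWithin c I s₁‖ ≤ ρ * |s₂ - s₁| ^ γ) :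
    (fun s => c s - c s₀ - (s - s₀) • derivWithin c I s₀) =O[𝓝 s₀]
      (fun s => |s - s₀| ^ (1 + γ)) := by
  refine IsBigO.of_bound ρ ?_
  filter_upwards [hI] with s hs
  rw [Real.norm_eq_abs, abs_of_nonneg (Real.rpow_nonneg (abs_nonneg _) _)]
  exact norm_sub_sub_smul_derivWithin_le hIc hc hρ hγ hH (mem_of_mem_nhds hI) hs

theorem ContDiffOn.hasStrictDerivAt_derivWithin {E : Type*} [NormedAddCommGroup E]
    [NormedSpace ℝ E] {c : ℝ → E} {I : Set ℝ} {s₀ : ℝ} {n : WithTop ℕ∞} (hc : ContDiffOn ℝ n c I)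
    (hn : n ≠ 0) (hI : I ∈ 𝓝 s₀) : HasStrictDerivAt c (derivWithin c I s₀) s₀ := by
  simpa only [derivWithin_of_mem_nhds hI] using (hc.contDiffAt hI).hasStrictDerivAt hn

theorem EuclideanSpace.isBigO_apply_sub {ι : Type*} [Fintype ι] {c : ℝ → EuclideanSpace ℝ ι}
    {v : EuclideanSpace ℝ ι} {s₀ e : ℝ} (hv : HasDerivAt c v s₀)
    (hflat : (fun s => c s - c s₀ - (s - s₀) • v) =O[𝓝 s₀] (fun s => |s - s₀| ^ e)) (i : ι) :
    (fun s => c s i - c s₀ i) =O[𝓝 s₀] (fun s => |s - s₀| ^ (if v i = 0 then e else 1)) := by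
  split_ifs with hi
  · refine ((EuclideanSpace.proj (𝕜 := ℝ) i).isBigO_comp _ _).trans hflat |>.congr_left ?_
    simp [hi]
  · have hvi : HasDerivAt (fun s => c s i) (v i) s₀ :=
      (EuclideanSpace.proj (𝕜 := ℝ) i).hasFDerivAt.comp_hasDerivAt s₀ hv
    simpa only [Real.rpow_one] using isBigO_abs_right.2 hvi.isBigO_sub

theorem exists_forall_ne_lt_ite_mul {ι : Type*} [Finite ι] {α : ι → ℝ}
    (hinj : Function.Injective α) {γ : ℝ} (hγ : 0 < γ) (hα : ∀ i, α i ∈ Ioo (1 / (1 + γ)) 1)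
    {p : ι → Prop} [DecidablePred p] (hp : ∃ i, ¬ p i) :
    ∃ j, ¬ p j ∧ ∀ i ≠ j, α j < (if p i then 1 + γ else 1) * α i := by
  have := Fintype.ofFinite ι
  obtain ⟨j, hj, hmin⟩ := Finset.exists_min_image (Finset.univ.filter (¬ p ·)) α
    (let ⟨i, hi⟩ := hp; ⟨i, by simpa using hi⟩)
  simp only [Finset.mem_filter, Finset.mem_univ, true_and] at hj hmin
  refine ⟨j, hj, fun i hij => ?_⟩
  split_ifs with hi
  · have h1 : 1 < (1 + γ) * α i := by
      have := (hα i).1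
      rwa [div_lt_iff₀ (by linarith), mul_comm] at this
    exact (hα j).2.trans h1
  · simpa using (hmin i hi).lt_of_ne (hinj.ne hij.symm)

theorem strictHolderAt_sum_of_dominant {ι : Type*} [Fintype ι] {g : ι → ℝ → ℝ} {e : ι → ℝ}
    {I : Set ℝ} {x₀ : ℝ} (hI : I ∈ 𝓝 x₀) (j : ι) (hej : 0 < e j) (hdom : ∀ i ≠ j, e j < e i)
    (hg : ∀ i, (fun x => g i x - g i x₀) =O[𝓝 x₀] (fun x => |x - x₀| ^ e i))
    (hgj : ∀ β, e j < β → ¬ (fun x => g j x - g j x₀) =O[𝓝[≠] x₀] (fun x => |x - x₀| ^ β)) :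
    StrictHolderAt (fun x => ∑ i, g i x) I (e j) x₀ := by
  classical
  have hsum : ∀ x, ∑ i, g i x - ∑ i, g i x₀ = ∑ i, (g i x - g i x₀) := fun x =>
    (Finset.sum_sub_distrib _ _).symm
  rw [strictHolderAt_iff_of_mem_nhds hI]
  simp only [hsum]
  have hle : ∀ {b}, 0 < b → ∀ {i}, b ≤ e i →
      (fun x => g i x - g i x₀) =O[𝓝[≠] x₀] (fun x => |x - x₀| ^ b) := fun hb _ hbi =>
    ((hg _).trans (isBigO_abs_sub_rpow_of_le hb hbi)).mono nhdsWithin_le_nhds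
  refine ⟨IsBigO.fun_sum fun i _ => hle hej ?_, fun β hβ hO => ?_⟩
  · rcases eq_or_ne i j with rfl | hij
    exacts [le_rfl, (hdom i hij).le]
  have hb : ∀ᶠ b in 𝓝[>] e j, b ≤ β ∧ ∀ i, i ≠ j → b ≤ e i := by
    refine (Filter.eventually_of_mem (Ioc_mem_nhdsGT hβ) fun b hb => hb.2).and ?_
    refine eventually_all.2 fun i => ?_
    rcases eq_or_ne i j with rfl | hij
    · exact Eventually.of_forall fun _ h => absurd rfl h
    · exact Filter.eventually_of_mem (Ioc_mem_nhdsGT (hdom i hij)) fun b hb _ => hb.2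
  -- at an exponent `b ∈ (e j, β]` below all other `e i`, the other terms cannot mask the `j`-th
  obtain ⟨b, ⟨hbβ, hbe⟩, hjb⟩ := (hb.and self_mem_nhdsWithin).exists
  refine hgj b hjb ?_
  have hb0 : 0 < b := hej.trans hjb
  have htot := hO.trans ((isBigO_abs_sub_rpow_of_le hb0 hbβ).mono nhdsWithin_le_nhds)
  have hrest : (fun x => ∑ i ∈ Finset.univ.erase j, (g i x - g i x₀)) =O[𝓝[≠] x₀]
      (fun x => |x - x₀| ^ b) :=
    IsBigO.fun_sum fun i hi => hle hb0 (hbe i (Finset.ne_of_mem_erase hi))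
  refine (htot.sub hrest).congr_left fun x => ?_
  rw [← Finset.add_sum_erase _ _ (Finset.mem_univ j), add_sub_cancel_right]

theorem sum_strictHolder_comp_curve_strictHolderAt_general {d : ℕ} (γ : ℝ)
    (hγ : γ ∈ Ioc (0 : ℝ) 1) (α : Fin d → ℝ) (hinj : Function.Injective α)
    (hα : ∀ j, α j ∈ Ioo (1 / (1 + γ)) 1) (f : Fin d → ℝ → ℝ)
    (hf : ∀ j x₀, StrictHolderAt (f j) univ (α j) x₀)
    (a b : ℝ) (c : ℝ → EuclideanSpace ℝ (Fin d)) (hc : ContDiffOn ℝ 1 c (Icc a b))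
    (hunit : ∀ s ∈ Icc a b, ‖derivWithin c (Icc a b) s‖ = 1) (ρ : ℝ) (hρ : 0 ≤ ρ)
    (hH : ∀ s₁ ∈ Icc a b, ∀ s₂ ∈ Icc a b,
      ‖derivWithin c (Icc a b) s₂ - derivWithin c (Icc a b) s₁‖ ≤ ρ * |s₂ - s₁| ^ γ)
    (s₀ : ℝ) (hs₀ : s₀ ∈ Ioo a b) :
    ∃ j : Fin d, StrictHolderAt
      ((fun x : EuclideanSpace ℝ (Fin d) => ∑ i, f i (x i)) ∘ c) (Icc a b) (α j) s₀ := by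
  have hI : Icc a b ∈ 𝓝 s₀ := Icc_mem_nhds hs₀.1 hs₀.2
  set v := derivWithin c (Icc a b) s₀
  have hv : HasStrictDerivAt c v s₀ := hc.hasStrictDerivAt_derivWithin one_ne_zero hI
  have hvi : ∀ i, HasStrictDerivAt (fun s => c s i) (v i) s₀ := fun i =>
    (EuclideanSpace.proj (𝕜 := ℝ) i).hasStrictFDerivAt.comp_hasStrictDerivAt s₀ hv
  have hcurve := EuclideanSpace.isBigO_apply_sub hv.hasDerivAt <|
    isBigO_sub_sub_smul_derivWithin hI (convex_Icc a b) (hc.differentiableOn one_ne_zero) hρ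
      hγ.1.le hH
  have hα0 : ∀ i, 0 < α i := fun i => lt_trans (by have := hγ.1; positivity) (hα i).1
  have hsupp : ∃ i, ¬ v i = 0 := by
    by_contra! h
    have hv0 : v = 0 := by ext i; exact h i
    simpa [v, hv0] using hunit s₀ (mem_of_mem_nhds hI)
  obtain ⟨j, hvj, hdom⟩ := exists_forall_ne_lt_ite_mul hinj hγ.1 hα hsupp
  have hej : (if v j = 0 then 1 + γ else 1) * α j = α j := by simp [hvj]
  refine ⟨j, ?_⟩
  rw [← hej]
  refine strictHolderAt_sum_of_dominant (g := fun i s => f i (c s i))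
    (e := fun i => (if v i = 0 then 1 + γ else 1) * α i) hI j (by simpa only [hej] using hα0 j)
    (by simpa only [hej] using hdom) (fun i => ?_) (fun β hβ => ?_)
  · exact ((hf i (c s₀ i)).isBigO univ_mem).comp_sub_rpow (hα0 i).le (hcurve i)
      (hvi i).hasDerivAt.continuousAt
  · rw [hej] at hβ
    exact not_isBigO_comp_of_hasStrictDerivAt (hvi j) hvj ((hα0 j).trans hβ).le
      ((hf j (c s₀ j)).not_isBigO univ_mem hβ)

/-- Let `γ ∈ (0,1]` and let `α₁, …, α_d` be distinct numbers in `(1/(1+γ), 1)`. If each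
`f_j : ℝ → ℝ` is continuous and strictly `C^{0,α_j}` at every point, and
`f (x₁, …, x_d) = Σ_j f_j (x_j)`, then for every unit-speed `C^{1,γ}` curve
`c : [a,b] → ℝ^d` and every `s₀ ∈ (a,b)` there is `α ∈ {α₁, …, α_d}` such that `f ∘ c`
is strictly `C^{0,α}` at `s₀`. -/
theorem sum_strictHolder_comp_curve_strictHolderAt {d : ℕ} (γ : ℝ)
    (hγ : γ ∈ Ioc (0 : ℝ) 1) (α : Fin d → ℝ) (hinj : Function.Injective α)
    (hα : ∀ j, α j ∈ Ioo (1 / (1 + γ)) 1) (f : Fin d → ℝ → ℝ)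
    (hfc : ∀ j, Continuous (f j)) (hf : ∀ j x₀, StrictHolderAt (f j) univ (α j) x₀)
    (a b : ℝ) (c : ℝ → EuclideanSpace ℝ (Fin d)) (hc : ContDiffOn ℝ 1 c (Icc a b))
    (hunit : ∀ s ∈ Icc a b, ‖derivWithin c (Icc a b) s‖ = 1) (ρ : ℝ) (hρ : 0 ≤ ρ)
    (hH : ∀ s₁ ∈ Icc a b, ∀ s₂ ∈ Icc a b,
      ‖derivWithin c (Icc a b) s₂ - derivWithin c (Icc a b) s₁‖ ≤ ρ * |s₂ - s₁| ^ γ)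
    (s₀ : ℝ) (hs₀ : s₀ ∈ Ioo a b) :
    ∃ j : Fin d, StrictHolderAt
      ((fun x : EuclideanSpace ℝ (Fin d) => ∑ i, f i (x i)) ∘ c) (Icc a b) (α j) s₀ :=
  sum_strictHolder_comp_curve_strictHolderAt_general γ hγ α hinj hα f hf a b c hc hunit ρ hρ hH s₀
    hs₀
end

section
/- Let U be a bounded open set in ℝ^d, let n be a positive integer, and let γ ∈ (0,1]. Then ℱ_n^γ(U) is a closed subset of C(U̅). -/
/-!
Let `fₖ → f` with `fₖ ∈ ℱ_n^γ(U)` witnessed by curves `cₖ`. The derivatives `cₖ'` take values in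
the unit sphere and share the Hölder modulus `n |t|^γ`, so by Arzelà–Ascoli a subsequence
converges uniformly on `[-1/n, 1/n]`; since `U̅` is compact we may also assume `cₖ 0` converges.
Integrating the limit derivative from the limit of `cₖ 0` gives a `C¹` curve `c` with `cₖ → c`
pointwise. Unit speed, the Hölder bound and membership in the closed set `K_n` pass to the
limit, and so does `|fₖ (cₖ s) - fₖ (cₖ 0)| ≤ n |s|`, because evaluation
`C(U̅) × U̅ → ℝ` is jointly continuous.
-/

open Set Filter Topology

/-- `K_n`: the points of `U` at distance at least `1/n` from the boundary of `U`. -/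
def Kset {d : ℕ} (U : Set (EuclideanSpace ℝ (Fin d))) (n : ℕ) :
    Set (EuclideanSpace ℝ (Fin d)) :=
  {u ∈ U | ∀ x ∈ frontier U, 1 / (n : ℝ) ≤ ‖u - x‖}

/-- `𝒞_n^γ(U)`: unit-speed `C¹` curves `c : [-1/n, 1/n] → U` whose derivative satisfies
`‖c'(s₂) - c'(s₁)‖ ≤ n |s₂ - s₁|^γ` and whose image lies in `K_n`. -/
def CurveClass {d : ℕ} (U : Set (EuclideanSpace ℝ (Fin d))) (n : ℕ) (γ : ℝ) :
    Set (ℝ → EuclideanSpace ℝ (Fin d)) :=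
  {c | ContDiffOn ℝ 1 c (Icc (-(1 / (n : ℝ))) (1 / n)) ∧
    (∀ s ∈ Icc (-(1 / (n : ℝ))) (1 / n),
      ‖derivWithin c (Icc (-(1 / (n : ℝ))) (1 / n)) s‖ = 1) ∧
    (∀ s₁ ∈ Icc (-(1 / (n : ℝ))) (1 / n), ∀ s₂ ∈ Icc (-(1 / (n : ℝ))) (1 / n),
      ‖derivWithin c (Icc (-(1 / (n : ℝ))) (1 / n)) s₂ -
          derivWithin c (Icc (-(1 / (n : ℝ))) (1 / n)) s₁‖ ≤ (n : ℝ) * |s₂ - s₁| ^ γ) ∧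
    ∀ s ∈ Icc (-(1 / (n : ℝ))) (1 / n), c s ∈ Kset U n}

open Classical in
/-- Extend a continuous function on `closure U` to all of `ℝ^d` by zero. -/
noncomputable def extendCl {d : ℕ} (U : Set (EuclideanSpace ℝ (Fin d)))
    (f : C(closure U, ℝ)) : EuclideanSpace ℝ (Fin d) → ℝ :=
  fun x => if hx : x ∈ closure U then f ⟨x, hx⟩ else 0

/-- `ℱ_n^γ(U)`: those `f ∈ C(U̅)` such that for some curve `c ∈ 𝒞_n^γ(U)` one has
`|f (c s) - f (c 0)| ≤ n |s|` for all `s ∈ [-1/n, 1/n]`. -/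
def Fclass {d : ℕ} (U : Set (EuclideanSpace ℝ (Fin d))) (n : ℕ) (γ : ℝ) :
    Set C(closure U, ℝ) :=
  {f | ∃ c ∈ CurveClass U n γ, ∀ s ∈ Icc (-(1 / (n : ℝ))) (1 / n),
    |extendCl U f (c s) - extendCl U f (c 0)| ≤ (n : ℝ) * |s|}

open intervalIntegral

section Curves

variable {E : Type*} [NormedAddCommGroup E] [NormedSpace ℝ E] [CompleteSpace E]

theorem integral_derivWithin_Icc_eq_sub {f : ℝ → E} {a b x y : ℝ} (hab : a < b)
    (hf : ContDiffOn ℝ 1 f (Icc a b)) (hx : x ∈ Icc a b) (hy : y ∈ Icc a b) :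
    ∫ t in x..y, derivWithin f (Icc a b) t = f y - f x := by
  have hsub : uIcc x y ⊆ Icc a b := uIcc_subset_Icc hx hy
  refine integral_eq_sub_of_hasDeriv_right (hf.continuousOn.mono hsub) (fun t ht => ?_)
    ((hf.continuousOn_derivWithin (uniqueDiffOn_Icc hab) le_rfl).mono hsub).intervalIntegrable
  have ht' : t ∈ Ioo a b :=
    ⟨(le_min hx.1 hy.1).trans_lt ht.1, ht.2.trans_le (max_le hx.2 hy.2)⟩
  exact ((hf.differentiableOn one_ne_zero t (Ioo_subset_Icc_self ht')).hasDerivWithinAt.hasDerivAt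
    (Icc_mem_nhds ht'.1 ht'.2)).hasDerivWithinAt

theorem exists_tendsto_of_tendstoUniformlyOn_derivWithin {a b x₀ : ℝ} (hab : a < b)
    (hx₀ : x₀ ∈ Icc a b) {c : ℕ → ℝ → E} (hc : ∀ k, ContDiffOn ℝ 1 (c k) (Icc a b))
    {g : ℝ → E} (hg : Continuous g)
    (hderiv : TendstoUniformlyOn (fun k => derivWithin (c k) (Icc a b)) g atTop (Icc a b))
    {y₀ : E} (h₀ : Tendsto (fun k => c k x₀) atTop (𝓝 y₀)) :
    ∃ c' : ℝ → E, ContDiffOn ℝ 1 c' (Icc a b) ∧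
      (∀ s ∈ Icc a b, derivWithin c' (Icc a b) s = g s) ∧
      ∀ s ∈ Icc a b, Tendsto (fun k => c k s) atTop (𝓝 (c' s)) := by
  have hprim : ∀ t, HasDerivAt (fun t => y₀ + ∫ u in x₀..t, g u) (g t) t := fun t =>
    (integral_hasDerivAt_right (hg.intervalIntegrable _ _) (hg.stronglyMeasurableAtFilter _ _)
      hg.continuousAt).const_add y₀
  refine ⟨fun t => y₀ + ∫ u in x₀..t, g u, ?_,
    fun s hs => (hprim s).hasDerivWithinAt.derivWithin (uniqueDiffOn_Icc hab s hs), fun s hs => ?_⟩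
  · have hderiv' : deriv (fun t => y₀ + ∫ u in x₀..t, g u) = g := funext fun t => (hprim t).deriv
    exact (contDiff_one_iff_deriv.2
      ⟨fun t => (hprim t).differentiableAt, hderiv'.symm ▸ hg⟩).contDiffOn
  · have hsub : uIcc x₀ s ⊆ Icc a b := uIcc_subset_Icc hx₀ hs
    have hint := (hderiv.mono hsub).tendsto_intervalIntegral_of_continuousOn
      (μ := MeasureTheory.volume)
      (Eventually.of_forall fun k =>
        ((hc k).continuousOn_derivWithin (uniqueDiffOn_Icc hab) le_rfl).mono hsub)
    refine (h₀.add hint).congr fun k => ?_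
    rw [integral_derivWithin_Icc_eq_sub hab (hc k) hx₀ hs]
    abel

end Curves

theorem exists_subseq_tendstoUniformlyOn_of_holder {E : Type*} [NormedAddCommGroup E]
    {K : Set E} (hK : IsCompact K) {a b C γ : ℝ} (hab : a ≤ b) (hγ : 0 < γ) {u : ℕ → ℝ → E}
    (hmaps : ∀ k, MapsTo (u k) (Icc a b) K)
    (hholder : ∀ k, ∀ s ∈ Icc a b, ∀ t ∈ Icc a b, ‖u k t - u k s‖ ≤ C * |t - s| ^ γ) :
    ∃ g : ℝ → E, Continuous g ∧ ∃ φ : ℕ → ℕ, StrictMono φ ∧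
      TendstoUniformlyOn (fun k => u (φ k)) g atTop (Icc a b) := by
  have hmod : Tendsto (fun r : ℝ => C * r ^ γ) (𝓝 0) (𝓝 0) := by
    simpa [Real.zero_rpow hγ.ne'] using
      ((Real.continuousAt_rpow_const 0 γ (Or.inr hγ.le)).const_mul C).tendsto
  have hdist : ∀ k (s t : Icc a b), dist (u k s) (u k t) ≤ C * dist s t ^ γ := fun k s t => by
    rw [dist_eq_norm, Subtype.dist_eq, Real.dist_eq]
    exact hholder k t t.2 s s.2
  have hequi : Equicontinuous fun k (s : Icc a b) => u k s :=
    Metric.equicontinuous_of_continuity_modulus _ hmod _ fun s t k => hdist k s t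
  let G : ℕ → BoundedContinuousFunction (Icc a b) E := fun k => .mkOfCompact ⟨_, hequi.continuous k⟩
  have hG : IsCompact (closure (range G)) :=
    BoundedContinuousFunction.arzela_ascoli K hK _ (by rintro _ s ⟨k, rfl⟩; exact hmaps k s.2)
      (Metric.equicontinuous_of_continuity_modulus _ hmod _
        (by rintro s t ⟨_, k, rfl⟩; exact hdist k s t))
  obtain ⟨F, -, φ, hφ, hlim⟩ := hG.tendsto_subseq fun k => subset_closure (mem_range_self k)
  refine ⟨F ∘ projIcc a b hab, F.continuous.comp continuous_projIcc, φ, hφ, ?_⟩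
  have hF : (F ∘ projIcc a b hab) ∘ Subtype.val = F :=
    funext fun s => congrArg F (projIcc_val hab s)
  rw [tendstoUniformlyOn_iff_tendstoUniformly_comp_coe, hF]
  exact BoundedContinuousFunction.tendsto_iff_tendstoUniformly.1 hlim

section CurveClass

variable {d n : ℕ} {U : Set (EuclideanSpace ℝ (Fin d))} {γ : ℝ}

theorem isClosed_Kset (hU : IsOpen U) (hn : 0 < n) : IsClosed (Kset U n) := by
  have hKset : Kset U n = closure U ∩ ⋂ x ∈ frontier U, {u | 1 / (n : ℝ) ≤ ‖u - x‖} := by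
    ext u
    simp only [Kset, mem_inter_iff, mem_iInter, mem_ofPred_eq]
    refine ⟨fun h => ⟨subset_closure h.1, h.2⟩, fun ⟨hcl, hfar⟩ => ⟨?_, hfar⟩⟩
    by_contra hu
    have := hfar u (hU.frontier_eq ▸ ⟨hcl, hu⟩)
    simp only [sub_self, norm_zero] at this
    exact this.not_gt (by positivity)
  rw [hKset]
  exact isClosed_closure.inter (isClosed_biInter fun x _ =>
    isClosed_le continuous_const (continuous_id.sub continuous_const).norm)

theorem mem_curveClass_of_tendsto (hU : IsOpen U) (hn : 0 < n) {ι : Type*} {l : Filter ι}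
    [l.NeBot] {c : ι → ℝ → EuclideanSpace ℝ (Fin d)} (hc : ∀ i, c i ∈ CurveClass U n γ)
    {c' : ℝ → EuclideanSpace ℝ (Fin d)} (hc' : ContDiffOn ℝ 1 c' (Icc (-(1 / (n : ℝ))) (1 / n)))
    (hlim : ∀ s ∈ Icc (-(1 / (n : ℝ))) (1 / n), Tendsto (fun i => c i s) l (𝓝 (c' s)))
    (hderiv : ∀ s ∈ Icc (-(1 / (n : ℝ))) (1 / n),
      Tendsto (fun i => derivWithin (c i) (Icc (-(1 / (n : ℝ))) (1 / n)) s) l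
        (𝓝 (derivWithin c' (Icc (-(1 / (n : ℝ))) (1 / n)) s))) :
    c' ∈ CurveClass U n γ :=
  ⟨hc',
    fun s hs => tendsto_nhds_unique (hderiv s hs).norm
      (tendsto_const_nhds.congr fun i => ((hc i).2.1 s hs).symm),
    fun s₁ hs₁ s₂ hs₂ => le_of_tendsto ((hderiv s₂ hs₂).sub (hderiv s₁ hs₁)).norm
      (Eventually.of_forall fun i => (hc i).2.2.1 s₁ hs₁ s₂ hs₂),
    fun s hs => (isClosed_Kset hU hn).mem_of_tendsto (hlim s hs)
      (Eventually.of_forall fun i => (hc i).2.2.2 s hs)⟩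

theorem zero_mem_Icc_neg_one_div (n : ℕ) : (0 : ℝ) ∈ Icc (-(1 / (n : ℝ))) (1 / n) :=
  ⟨neg_nonpos.2 (by positivity), by positivity⟩

theorem exists_subseq_tendsto_mem_curveClass (hU : IsOpen U) (hUb : Bornology.IsBounded U)
    (hn : 0 < n) (hγ : 0 < γ) {c : ℕ → ℝ → EuclideanSpace ℝ (Fin d)}
    (hc : ∀ k, c k ∈ CurveClass U n γ) :
    ∃ c' ∈ CurveClass U n γ, ∃ φ : ℕ → ℕ, StrictMono φ ∧
      ∀ s ∈ Icc (-(1 / (n : ℝ))) (1 / n), Tendsto (fun k => c (φ k) s) atTop (𝓝 (c' s)) := by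
  have hab : -(1 / (n : ℝ)) < 1 / n := neg_lt_self (by positivity)
  have h0 := zero_mem_Icc_neg_one_div n
  obtain ⟨g, hg, φ, hφ, hunif⟩ := exists_subseq_tendstoUniformlyOn_of_holder
    (isCompact_sphere (0 : EuclideanSpace ℝ (Fin d)) 1) hab.le hγ
    (u := fun k => derivWithin (c k) (Icc (-(1 / (n : ℝ))) (1 / n)))
    (fun k s hs => mem_sphere_zero_iff_norm.2 ((hc k).2.1 s hs)) (fun k => (hc k).2.2.1)
  obtain ⟨y, -, ψ, hψ, hy⟩ := hUb.isCompact_closure.tendsto_subseq fun k =>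
    subset_closure ((hc (φ k)).2.2.2 0 h0).1
  obtain ⟨c', hc'C1, hc'deriv, hc'lim⟩ := exists_tendsto_of_tendstoUniformlyOn_derivWithin hab h0
    (fun k => (hc (φ (ψ k))).1) hg (fun u hu => hψ.tendsto_atTop.eventually (hunif u hu)) hy
  refine ⟨c', mem_curveClass_of_tendsto hU hn (fun k => hc (φ (ψ k))) hc'C1 hc'lim fun s hs => ?_,
    φ ∘ ψ, hφ.comp hψ, hc'lim⟩
  rw [hc'deriv s hs]
  exact (hunif.tendsto_at hs).comp hψ.tendsto_atTop

theorem extendCl_of_mem (f : C(closure U, ℝ)) {x : EuclideanSpace ℝ (Fin d)} (hx : x ∈ closure U) :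
    extendCl U f x = f ⟨x, hx⟩ :=
  dif_pos hx

theorem tendsto_extendCl {ι : Type*} {l : Filter ι} {fs : ι → C(closure U, ℝ)}
    {f : C(closure U, ℝ)} {xs : ι → EuclideanSpace ℝ (Fin d)} {x : EuclideanSpace ℝ (Fin d)}
    (hf : Tendsto fs l (𝓝 f)) (hxs : ∀ i, xs i ∈ closure U) (hx : x ∈ closure U)
    (hlim : Tendsto xs l (𝓝 x)) :
    Tendsto (fun i => extendCl U (fs i) (xs i)) l (𝓝 (extendCl U f x)) := by
  have : LocallyCompactSpace (closure U) :=
    isClosed_closure.isClosedEmbedding_subtypeVal.locallyCompactSpace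
  simp only [extendCl_of_mem _ (hxs _), extendCl_of_mem _ hx]
  exact hf.eval (tendsto_subtype_rng.2 hlim)

end CurveClass

/-- `ℱ_n^γ(U)` is a closed subset of `C(U̅)`. -/
theorem fclass_isClosed {d : ℕ} (U : Set (EuclideanSpace ℝ (Fin d))) (hU : IsOpen U)
    (hUb : Bornology.IsBounded U) (n : ℕ) (hn : 0 < n) (γ : ℝ) (hγ : γ ∈ Ioc (0 : ℝ) 1) :
    IsClosed (Fclass U n γ) := by
  have : CompactSpace (closure U) := isCompact_iff_compactSpace.mp hUb.isCompact_closure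
  refine IsSeqClosed.isClosed fun fs f hfs hf => ?_
  choose c hc hfc using hfs
  obtain ⟨c', hc', φ, hφ, hlim⟩ := exists_subseq_tendsto_mem_curveClass hU hUb hn hγ.1 hc
  have hval : ∀ s ∈ Icc (-(1 / (n : ℝ))) (1 / n), Tendsto
      (fun k => extendCl U (fs (φ k)) (c (φ k) s)) atTop (𝓝 (extendCl U f (c' s))) :=
    fun s hs => tendsto_extendCl (hf.comp hφ.tendsto_atTop)
      (fun k => subset_closure ((hc (φ k)).2.2.2 s hs).1) (subset_closure (hc'.2.2.2 s hs).1)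
      (hlim s hs)
  have h0 := zero_mem_Icc_neg_one_div n
  exact ⟨c', hc', fun s hs => le_of_tendsto ((hval s hs).sub (hval 0 h0)).abs
    (Eventually.of_forall fun k => hfc (φ k) s hs)⟩
end

section
/- Suppose 0 < α < 1, b is an even positive integer, and b^{1−α} > 2. Then the function Φ is strictly C^{0,α} on ℝ. -/
open Set Filter Topology

/-- The sawtooth function `φ(x) = dist(x, 2ℤ)`. -/
noncomputable def sawtooth (x : ℝ) : ℝ :=
  Metric.infDist x {y : ℝ | ∃ m : ℤ, y = 2 * m}

/-- Katzourakis' function `Φ(x) = Σ_{k=0}^∞ b^{-kα} φ(b^k x)`. -/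
noncomputable def Phi (b : ℕ) (α : ℝ) (x : ℝ) : ℝ :=
  ∑' k : ℕ, (b : ℝ) ^ (-((k : ℝ) * α)) * sawtooth ((b : ℝ) ^ k * x)

/-- `f : ℝ → ℝ` is strictly `C^{0,α}`: it is `α`-Hölder with some constant `C > 0`, and for
every `β > α` and every `y`, `limsup_{x→y} |f x - f y| / |x - y|^β = ∞` (i.e. the difference
quotients are frequently larger than any bound near `y`). -/
def StrictlyHolder (f : ℝ → ℝ) (α : ℝ) : Prop :=
  (∃ C : ℝ, 0 < C ∧ ∀ x y : ℝ, |f x - f y| ≤ C * |x - y| ^ α) ∧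
  ∀ β : ℝ, α < β → ∀ y M : ℝ, ∃ᶠ x in 𝓝[≠] y, M < |f x - f y| / |x - y| ^ β

/-!
Hölder bound: split the series at the scale `N` with `b^{-N} ≈ |x - y|`. The first `N` terms
are Lipschitz with constants `b^{k(1-α)}`, which sum to `≲ b^{N(1-α)} |x - y| ≲ |x - y|^α`, and
the tail is `≲ b^{-Nα} ≲ |x - y|^α`.

Sharpness: between the grid points `j b^{-n}` and `(j+1) b^{-n}` every term with `k > n`
vanishes because `b` is even, the `n`-th term changes by exactly `b^{-nα}`, and the first `n`
terms change by at most `b^{-nα} / (b^{1-α} - 1)`. Since `b^{1-α} > 2` the `n`-th term wins, so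
one of the two grid points around `y` is at distance `≤ b^{-n}` from `y` and changes `Φ` by
`≳ b^{-nα}`, which beats `b^{-nβ}` for `β > α`.
-/

lemma sawtooth_nonneg (x : ℝ) : 0 ≤ sawtooth x := Metric.infDist_nonneg

lemma sawtooth_le_abs_sub (x : ℝ) (m : ℤ) : sawtooth x ≤ |x - 2 * m| := by
  simpa [sawtooth, Real.dist_eq] using
    Metric.infDist_le_dist_of_mem (x := x) (⟨m, rfl⟩ : (2 * m : ℝ) ∈ {y : ℝ | ∃ m : ℤ, y = 2 * m})

lemma sawtooth_le_one (x : ℝ) : sawtooth x ≤ 1 :=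
  calc sawtooth x ≤ |x - 2 * round (x / 2)| := sawtooth_le_abs_sub x _
    _ = 2 * |x / 2 - round (x / 2)| := by
      rw [show x - 2 * (round (x / 2) : ℝ) = 2 * (x / 2 - round (x / 2)) by ring, abs_mul, abs_two]
    _ ≤ 1 := by linarith [abs_sub_round (x / 2)]

lemma abs_sawtooth_sub_le (x y : ℝ) : |sawtooth x - sawtooth y| ≤ |x - y| := by
  simpa [sawtooth, Real.dist_eq] using (Metric.lipschitz_infDist_pt _).dist_le_mul x y

lemma abs_sawtooth_sub_le_one (x y : ℝ) : |sawtooth x - sawtooth y| ≤ 1 :=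
  abs_sub_le_of_nonneg_of_le (sawtooth_nonneg x) (sawtooth_le_one x) (sawtooth_nonneg y)
    (sawtooth_le_one y)

lemma sawtooth_intCast_of_even {j : ℤ} (hj : Even j) : sawtooth j = 0 := by
  obtain ⟨m, rfl⟩ := hj
  exact Metric.infDist_zero_of_mem ⟨m, by push_cast; ring⟩

lemma sawtooth_intCast_of_odd {j : ℤ} (hj : Odd j) : sawtooth j = 1 := by
  have hne : {y : ℝ | ∃ m : ℤ, y = 2 * m}.Nonempty := ⟨0, 0, by simp⟩
  refine le_antisymm (sawtooth_le_one j) ((Metric.le_infDist hne).2 ?_)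
  rintro _ ⟨m, rfl⟩
  obtain ⟨k, rfl⟩ := hj
  have h : (1 : ℤ) ≤ |2 * k + 1 - 2 * m| := Int.one_le_abs (by omega)
  rw [Real.dist_eq]
  exact_mod_cast h

lemma abs_sawtooth_intCast_add_one_sub (j : ℤ) :
    |sawtooth ((j + 1 : ℤ) : ℝ) - sawtooth j| = 1 := by
  rcases Int.even_or_odd j with hj | hj
  · rw [sawtooth_intCast_of_odd hj.add_one, sawtooth_intCast_of_even hj]
    norm_num
  · rw [sawtooth_intCast_of_even hj.add_one, sawtooth_intCast_of_odd hj]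
    norm_num

lemma rpow_neg_natCast_mul {x : ℝ} (hx : 0 ≤ x) (k : ℕ) (α : ℝ) :
    x ^ (-((k : ℝ) * α)) = (x ^ (-α)) ^ k := by
  rw [← mul_neg, Real.rpow_natCast_mul hx, ← Real.rpow_pow_comm hx]

lemma rpow_one_sub_eq_rpow_neg_mul {x : ℝ} (hx : 0 < x) (α : ℝ) :
    x ^ (1 - α) = x ^ (-α) * x := by
  rw [show 1 - α = -α + 1 by ring, Real.rpow_add_one hx.ne']

lemma abs_tsum_le_of_abs_le_geometric {a : ℕ → ℝ} {r s h : ℝ} (hr : r < 1) (hs : 1 < s)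
    (har : ∀ k, |a k| ≤ r ^ k) (has : ∀ k, |a k| ≤ s ^ k * h) (N : ℕ) :
    |∑' k, a k| ≤ (s ^ N - 1) / (s - 1) * h + r ^ N / (1 - r) := by
  have hr0 : 0 ≤ r := by simpa using (abs_nonneg (a 1)).trans (har 1)
  have hgeom := summable_geometric_of_lt_one hr0 hr
  have hsum : Summable fun k => |a k| := .of_nonneg_of_le (fun k => abs_nonneg _) har hgeom
  have head : ∑ k ∈ Finset.range N, |a k| ≤ (s ^ N - 1) / (s - 1) * h := by
    rw [← geom_sum_eq hs.ne', Finset.sum_mul]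
    exact Finset.sum_le_sum fun k _ => has k
  have tail : ∑' k, |a (k + N)| ≤ r ^ N / (1 - r) :=
    calc ∑' k, |a (k + N)| ≤ ∑' k, r ^ N * r ^ k :=
          ((summable_nat_add_iff N).2 hsum).tsum_le_tsum (fun k => (har _).trans_eq (by ring))
            (hgeom.mul_left _)
      _ = r ^ N / (1 - r) := by rw [tsum_mul_left, tsum_geometric_of_lt_one hr0 hr, div_eq_mul_inv]
  calc |∑' k, a k| ≤ ∑' k, |a k| := norm_tsum_le_tsum_norm (f := a) hsum
    _ = ∑ k ∈ Finset.range N, |a k| + ∑' k, |a (k + N)| := (hsum.sum_add_tsum_nat_add N).symm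
    _ ≤ _ := add_le_add head tail

lemma exists_mem_Icc_ne_le_abs_sub {f : ℝ → ℝ} {u v y δ : ℝ} (hu : u ≤ y) (hv : y < v)
    (h : 2 * δ ≤ |f v - f u|) : ∃ x ∈ Icc u v, x ≠ y ∧ δ ≤ |f x - f y| := by
  by_cases hvy : δ ≤ |f v - f y|
  · exact ⟨v, ⟨hu.trans hv.le, le_rfl⟩, hv.ne', hvy⟩
  push Not at hvy
  have htri : |f v - f u| ≤ |f v - f y| + |f u - f y| := by
    simpa only [abs_sub_comm (f y) (f u)] using abs_sub_le (f v) (f y) (f u)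
  refine ⟨u, ⟨le_rfl, hu.trans hv.le⟩, ?_, by linarith⟩
  rintro rfl
  linarith [abs_nonneg (f v - f u)]

lemma frequently_lt_abs_sub_div_rpow {f : ℝ → ℝ} {y c q α β : ℝ} (hc : 0 < c) (hq0 : 0 < q)
    (hq1 : q < 1) (hαβ : α < β) (hβ : 0 ≤ β)
    (h : ∀ n : ℕ, ∃ x, x ≠ y ∧ |x - y| ≤ q ^ n ∧ c * (q ^ α) ^ n ≤ |f x - f y|) (M : ℝ) :
    ∃ᶠ x in 𝓝[≠] y, M < |f x - f y| / |x - y| ^ β := by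
  choose x hxy hxq hfx using h
  have hx : Tendsto x atTop (𝓝[≠] y) := by
    refine tendsto_nhdsWithin_iff.2 ⟨?_, .of_forall hxy⟩
    exact tendsto_iff_dist_tendsto_zero.2 <| squeeze_zero (fun _ => dist_nonneg)
      (fun n => (Real.dist_eq _ _).trans_le (hxq n))
      (tendsto_pow_atTop_nhds_zero_of_lt_one hq0.le hq1)
  have hK : 1 < q ^ (α - β) := Real.one_lt_rpow_of_pos_of_lt_one_of_neg hq0 hq1 (by linarith)
  have hquot : ∀ n, c * (q ^ (α - β)) ^ n ≤ |f (x n) - f y| / |x n - y| ^ β := by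
    intro n
    have hpos : 0 < |x n - y| ^ β := Real.rpow_pos_of_pos (abs_pos.2 (sub_ne_zero.2 (hxy n))) _
    rw [le_div_iff₀ hpos]
    calc c * (q ^ (α - β)) ^ n * |x n - y| ^ β ≤ c * (q ^ (α - β)) ^ n * (q ^ n) ^ β := by
          gcongr
          exact hxq n
      _ = c * (q ^ α) ^ n := by
          rw [← Real.rpow_pow_comm hq0.le, mul_assoc, ← mul_pow, ← Real.rpow_add hq0,
            sub_add_cancel]
      _ ≤ |f (x n) - f y| := hfx n
  refine hx.frequently (Eventually.frequently ?_)
  filter_upwards [((tendsto_pow_atTop_atTop_of_one_lt hK).const_mul_atTop hc).eventually_gt_atTop M]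
    with n hn using hn.trans_le (hquot n)

noncomputable def phiTerm (b : ℕ) (α : ℝ) (k : ℕ) (x : ℝ) : ℝ :=
  ((b : ℝ) ^ (-α)) ^ k * sawtooth ((b : ℝ) ^ k * x)

section Phi

variable {b : ℕ} {α : ℝ}

lemma Phi_eq_tsum_phiTerm (x : ℝ) : Phi b α x = ∑' k, phiTerm b α k x := by
  simp only [Phi, phiTerm, rpow_neg_natCast_mul (Nat.cast_nonneg b)]

lemma summable_phiTerm (hb : 1 < b) (hα : 0 < α) (x : ℝ) : Summable fun k => phiTerm b α k x :=
  .of_nonneg_of_le (fun k => mul_nonneg (by positivity) (sawtooth_nonneg _))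
    (fun k => mul_le_of_le_one_right (by positivity) (sawtooth_le_one _))
    (summable_geometric_of_lt_one (by positivity)
      (Real.rpow_lt_one_of_one_lt_of_neg (Nat.one_lt_cast.2 hb) (neg_lt_zero.2 hα)))

lemma Phi_sub_eq_tsum (hb : 1 < b) (hα : 0 < α) (x y : ℝ) :
    Phi b α x - Phi b α y = ∑' k, (phiTerm b α k x - phiTerm b α k y) := by
  rw [Phi_eq_tsum_phiTerm, Phi_eq_tsum_phiTerm,
    (summable_phiTerm hb hα x).tsum_sub (summable_phiTerm hb hα y)]

lemma abs_phiTerm_sub (k : ℕ) (x y : ℝ) :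
    |phiTerm b α k x - phiTerm b α k y| =
      ((b : ℝ) ^ (-α)) ^ k * |sawtooth ((b : ℝ) ^ k * x) - sawtooth ((b : ℝ) ^ k * y)| := by
  rw [phiTerm, phiTerm, ← mul_sub, abs_mul, abs_of_nonneg (by positivity)]

lemma abs_phiTerm_sub_le_pow (k : ℕ) (x y : ℝ) :
    |phiTerm b α k x - phiTerm b α k y| ≤ ((b : ℝ) ^ (-α)) ^ k := by
  rw [abs_phiTerm_sub]
  exact mul_le_of_le_one_right (by positivity) (abs_sawtooth_sub_le_one _ _)

lemma abs_phiTerm_sub_le_mul (hb : 0 < b) (k : ℕ) (x y : ℝ) :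
    |phiTerm b α k x - phiTerm b α k y| ≤ ((b : ℝ) ^ (1 - α)) ^ k * |x - y| := by
  have hbk : (0 : ℝ) < (b : ℝ) ^ k := by positivity
  have hlip := abs_sawtooth_sub_le ((b : ℝ) ^ k * x) ((b : ℝ) ^ k * y)
  rw [← mul_sub, abs_mul, abs_of_pos hbk] at hlip
  rw [abs_phiTerm_sub, rpow_one_sub_eq_rpow_neg_mul (Nat.cast_pos.2 hb), mul_pow, mul_assoc]
  gcongr

lemma pow_mul_intCast_div_pow (hb : 0 < b) (j : ℤ) {n k : ℕ} (hnk : n ≤ k) :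
    (b : ℝ) ^ k * (j / (b : ℝ) ^ n) = ((j * (b : ℤ) ^ (k - n) : ℤ) : ℝ) := by
  push_cast
  rw [pow_sub₀ _ (Nat.cast_ne_zero.2 hb.ne') hnk]
  ring

lemma phiTerm_intCast_div_pow_eq_zero (hb : 0 < b) (hbe : Even b) (j : ℤ) {n k : ℕ}
    (hnk : n < k) : phiTerm b α k (j / (b : ℝ) ^ n) = 0 := by
  rw [phiTerm, pow_mul_intCast_div_pow hb j hnk.le, sawtooth_intCast_of_even, mul_zero]
  exact (((Int.even_coe_nat b).2 hbe).pow_of_ne_zero (by omega)).mul_left j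

lemma abs_Phi_sub_le (hb : 1 < b) (hα0 : 0 < α) (hα1 : α < 1) (x y : ℝ) (N : ℕ) :
    |Phi b α x - Phi b α y| ≤
      (((b : ℝ) ^ (1 - α)) ^ N - 1) / ((b : ℝ) ^ (1 - α) - 1) * |x - y| +
        ((b : ℝ) ^ (-α)) ^ N / (1 - (b : ℝ) ^ (-α)) := by
  rw [Phi_sub_eq_tsum hb hα0]
  exact abs_tsum_le_of_abs_le_geometric
    (Real.rpow_lt_one_of_one_lt_of_neg (Nat.one_lt_cast.2 hb) (neg_lt_zero.2 hα0))
    (Real.one_lt_rpow (Nat.one_lt_cast.2 hb) (by linarith))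
    (abs_phiTerm_sub_le_pow · x y) (abs_phiTerm_sub_le_mul (by omega) · x y) N

lemma Phi_holder (hb : 1 < b) (hα0 : 0 < α) (hα1 : α < 1) :
    ∃ C : ℝ, 0 < C ∧ ∀ x y : ℝ, |Phi b α x - Phi b α y| ≤ C * |x - y| ^ α := by
  have hb0 : (0 : ℝ) < b := Nat.cast_pos.2 (by omega)
  set r : ℝ := (b : ℝ) ^ (-α) with hr
  set s : ℝ := (b : ℝ) ^ (1 - α) with hs
  have hr1 : 0 < 1 - r :=
    sub_pos.2 (Real.rpow_lt_one_of_one_lt_of_neg (Nat.one_lt_cast.2 hb) (neg_lt_zero.2 hα0))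
  have hs1 : 0 < s - 1 := sub_pos.2 (Real.one_lt_rpow (Nat.one_lt_cast.2 hb) (by linarith))
  refine ⟨s / (s - 1) + 1 / (1 - r), by positivity, fun x y => ?_⟩
  rcases eq_or_ne x y with rfl | hxy
  · simp [Real.zero_rpow hα0.ne']
  have h0 : 0 < |x - y| := abs_pos.2 (sub_ne_zero.2 hxy)
  set h := |x - y|
  rcases le_or_gt 1 h with h1 | h1
  · calc |Phi b α x - Phi b α y| ≤ 1 / (1 - r) := by simpa using abs_Phi_sub_le hb hα0 hα1 x y 0
      _ ≤ (s / (s - 1) + 1 / (1 - r)) * h ^ α :=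
        (le_add_of_nonneg_left (by positivity)).trans
          (le_mul_of_one_le_right (by positivity) (Real.one_le_rpow h1 hα0.le))
  obtain ⟨n, hn1, hn2⟩ := exists_nat_pow_near_of_lt_one h0 h1.le (inv_pos.2 hb0)
    (inv_lt_one_of_one_lt₀ (Nat.one_lt_cast.2 hb))
  have head : s ^ n * h ≤ h ^ α := by
    have hq : h ^ (1 - α) ≤ (s ^ n)⁻¹ :=
      calc h ^ (1 - α) ≤ ((b : ℝ)⁻¹ ^ n) ^ (1 - α) := Real.rpow_le_rpow h0.le hn2 (by linarith)
        _ = (s ^ n)⁻¹ := by rw [← Real.rpow_pow_comm (by positivity), Real.inv_rpow hb0.le, inv_pow]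
    calc s ^ n * h = s ^ n * h ^ (1 - α) * h ^ α := by
          rw [mul_assoc, ← Real.rpow_add h0]; norm_num
      _ ≤ s ^ n * (s ^ n)⁻¹ * h ^ α := by gcongr
      _ = h ^ α := by rw [mul_inv_cancel₀ (by positivity), one_mul]
  have tail : r ^ (n + 1) ≤ h ^ α := by
    rw [hr, Real.rpow_neg hb0.le, ← Real.inv_rpow hb0.le, Real.rpow_pow_comm (by positivity)]
    exact Real.rpow_le_rpow (by positivity) hn1.le hα0.le
  calc |Phi b α x - Phi b α y| ≤ (s ^ (n + 1) - 1) / (s - 1) * h + r ^ (n + 1) / (1 - r) :=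
        abs_Phi_sub_le hb hα0 hα1 x y (n + 1)
    _ ≤ s ^ (n + 1) / (s - 1) * h + h ^ α / (1 - r) := by gcongr; linarith
    _ = s / (s - 1) * (s ^ n * h) + 1 / (1 - r) * h ^ α := by ring
    _ ≤ s / (s - 1) * h ^ α + 1 / (1 - r) * h ^ α := by gcongr
    _ = (s / (s - 1) + 1 / (1 - r)) * h ^ α := by ring

lemma le_abs_Phi_grid_sub (hb : 1 < b) (hbe : Even b) (hα0 : 0 < α) (hα1 : α < 1) (n : ℕ)
    (j : ℤ) :
    ((b : ℝ) ^ (1 - α) - 2) / ((b : ℝ) ^ (1 - α) - 1) * ((b : ℝ) ^ (-α)) ^ n ≤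
      |Phi b α (((j + 1 : ℤ) : ℝ) / (b : ℝ) ^ n) - Phi b α (j / (b : ℝ) ^ n)| := by
  have hb0 : 0 < b := by omega
  have hbn : (b : ℝ) ^ n ≠ 0 := by positivity
  set r : ℝ := (b : ℝ) ^ (-α) with hr
  set s : ℝ := (b : ℝ) ^ (1 - α) with hs
  have hs1 : 0 < s - 1 := sub_pos.2 (Real.one_lt_rpow (Nat.one_lt_cast.2 hb) (by linarith))
  set u : ℝ := j / (b : ℝ) ^ n
  set v : ℝ := ((j + 1 : ℤ) : ℝ) / (b : ℝ) ^ n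
  set d : ℕ → ℝ := fun k => phiTerm b α k v - phiTerm b α k u
  have hsum : Phi b α v - Phi b α u = ∑ k ∈ Finset.range n, d k + d n := by
    rw [Phi_sub_eq_tsum hb hα0, tsum_eq_sum (s := Finset.range (n + 1)), Finset.sum_range_succ]
    intro k hk
    rw [Finset.mem_range, not_lt] at hk
    simp only [u, v, phiTerm_intCast_div_pow_eq_zero hb0 hbe _ hk, sub_zero]
  have hlast : |d n| = r ^ n := by
    simp only [d, u, v, abs_phiTerm_sub, mul_div_cancel₀ _ hbn, abs_sawtooth_intCast_add_one_sub,
      mul_one, r]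
  have hvu : |v - u| = ((b : ℝ) ^ n)⁻¹ := by
    rw [← sub_div, Int.cast_add, Int.cast_one, add_sub_cancel_left, one_div,
      abs_of_pos (by positivity)]
  have hhead : |∑ k ∈ Finset.range n, d k| ≤ r ^ n / (s - 1) :=
    calc |∑ k ∈ Finset.range n, d k| ≤ ∑ k ∈ Finset.range n, s ^ k * |v - u| :=
          (Finset.abs_sum_le_sum_abs _ _).trans
            (Finset.sum_le_sum fun k _ => abs_phiTerm_sub_le_mul hb0 k v u)
      _ = (s ^ n - 1) / (s - 1) * ((b : ℝ) ^ n)⁻¹ := by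
          rw [← Finset.sum_mul, geom_sum_eq (by linarith), hvu]
      _ ≤ s ^ n / (s - 1) * ((b : ℝ) ^ n)⁻¹ := by gcongr; linarith
      _ = r ^ n / (s - 1) := by
          rw [hs, rpow_one_sub_eq_rpow_neg_mul (Nat.cast_pos.2 hb0), ← hr, mul_pow]
          field_simp
  rw [hsum]
  calc (s - 2) / (s - 1) * r ^ n = |d n| - r ^ n / (s - 1) := by
        rw [hlast]; field_simp; ring
    _ ≤ |d n| - |∑ k ∈ Finset.range n, d k| := by linarith
    _ ≤ |∑ k ∈ Finset.range n, d k + d n| := by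
        simpa [add_comm] using abs_sub_abs_le_abs_add (d n) (∑ k ∈ Finset.range n, d k)


lemma exists_near_le_abs_Phi_sub (hb : 1 < b) (hbe : Even b) (hα0 : 0 < α)
    (hα1 : α < 1) (y : ℝ) (n : ℕ) :
    ∃ x, x ≠ y ∧ |x - y| ≤ (b : ℝ)⁻¹ ^ n ∧
      ((b : ℝ) ^ (1 - α) - 2) / ((b : ℝ) ^ (1 - α) - 1) / 2 * ((b : ℝ) ^ (-α)) ^ n ≤
        |Phi b α x - Phi b α y| := by
  have hbn : (0 : ℝ) < (b : ℝ) ^ n := by positivity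
  set j := ⌊(b : ℝ) ^ n * y⌋
  have hu : (j : ℝ) / (b : ℝ) ^ n ≤ y := (div_le_iff₀' hbn).2 (Int.floor_le _)
  have hv : y < ((j + 1 : ℤ) : ℝ) / (b : ℝ) ^ n := by
    push_cast
    exact (lt_div_iff₀' hbn).2 (Int.lt_floor_add_one _)
  obtain ⟨x, ⟨hux, hxv⟩, hxy, hfx⟩ := exists_mem_Icc_ne_le_abs_sub (f := Phi b α) hu hv
    (by linarith [le_abs_Phi_grid_sub hb hbe hα0 hα1 n j] :
      2 * (((b : ℝ) ^ (1 - α) - 2) / ((b : ℝ) ^ (1 - α) - 1) / 2 * ((b : ℝ) ^ (-α)) ^ n) ≤ _)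
  have hvu : ((j + 1 : ℤ) : ℝ) / (b : ℝ) ^ n - j / (b : ℝ) ^ n = (b : ℝ)⁻¹ ^ n := by
    rw [← sub_div, Int.cast_add, Int.cast_one, add_sub_cancel_left, one_div, inv_pow]
  exact ⟨x, hxy, abs_sub_le_iff.2 ⟨by linarith, by linarith⟩, hfx⟩

end Phi

/-- If `0 < α < 1`, `b` is an even positive integer, and `b^{1-α} > 2`, then `Φ` is
strictly `C^{0,α}` on `ℝ`. -/
theorem phi_strictlyHolder (α : ℝ) (hα0 : 0 < α) (hα1 : α < 1) (b : ℕ) (hb : 0 < b)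
    (hbe : Even b) (hb2 : 2 < (b : ℝ) ^ (1 - α)) :
    StrictlyHolder (Phi b α) α := by
  have hb1 : 1 < b := by
    obtain ⟨k, rfl⟩ := hbe
    omega
  have hb0 : (0 : ℝ) < b := Nat.cast_pos.2 hb
  refine ⟨Phi_holder hb1 hα0 hα1, fun β hβ y M => ?_⟩
  have hc : 0 < ((b : ℝ) ^ (1 - α) - 2) / ((b : ℝ) ^ (1 - α) - 1) / 2 :=
    div_pos (div_pos (by linarith) (by linarith)) two_pos
  refine frequently_lt_abs_sub_div_rpow hc (inv_pos.2 hb0)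
    (inv_lt_one_of_one_lt₀ (Nat.one_lt_cast.2 hb1)) hβ (by linarith) (fun n => ?_) M
  obtain ⟨x, hxy, hxq, hfx⟩ := exists_near_le_abs_Phi_sub hb1 hbe hα0 hα1 y n
  exact ⟨x, hxy, hxq, by rwa [Real.inv_rpow hb0.le, ← Real.rpow_neg hb0.le]⟩
end
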